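/- arXiv:1803.07609 — 3 statements merged into one kernel-verified Lean document; each statement's English description precedes it below -/
import Mathlib

section
/- The category of phylogenetic trees with n leaves is a poset: between any two phylogenetic trees (X,f,ℓ) and (Y,g,μ) there is at most one morphism. -/
/-!
Following parents only increases height, strictly except at a fixed point, so two ancestors of
the same point at the same height coincide. Every point `x` of a finite tree lies above a leaf
`ℓ i`; both `φ x` and `ψ x` then lie above `μ i` at height `f x`, hence they are equal.
-/

namespace ParentMap

variable {Z α : Type*}

def Reaches (parent : Z → Z) (a b : Z) : Prop := ∃ k, parent^[k] a = b

def HeightIncreasing [Preorder α] (parent : Z → Z) (h : Z → α) : Prop :=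
  ∀ z, parent z ≠ z → h z < h (parent z)

variable {parent : Z → Z} {a b c : Z}

theorem Reaches.refl (a : Z) : Reaches parent a a := ⟨0, rfl⟩

theorem Reaches.trans (hab : Reaches parent a b) (hbc : Reaches parent b c) :
    Reaches parent a c := by
  obtain ⟨m, rfl⟩ := hab
  obtain ⟨n, rfl⟩ := hbc
  exact ⟨n + m, Function.iterate_add_apply parent n m a⟩

theorem Reaches.total (hab : Reaches parent a b) (hac : Reaches parent a c) :
    Reaches parent b c ∨ Reaches parent c b := by
  obtain ⟨m, rfl⟩ := hab
  obtain ⟨n, rfl⟩ := hac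
  rcases le_total m n with hmn | hnm
  · exact .inl ⟨n - m, by rw [← Function.iterate_add_apply, Nat.sub_add_cancel hmn]⟩
  · exact .inr ⟨m - n, by rw [← Function.iterate_add_apply, Nat.sub_add_cancel hnm]⟩

theorem HeightIncreasing.of_root [Preorder α] {h : Z → α} {root : Z}
    (hroot : parent root = root) (hlt : ∀ z, z ≠ root → h z < h (parent z)) :
    HeightIncreasing parent h := by
  rintro z hz
  exact hlt z (by rintro rfl; exact hz hroot)

section Preorder

variable [Preorder α] {h : Z → α}

theorem HeightIncreasing.le_apply (hh : HeightIncreasing parent h) (z : Z) :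
    h z ≤ h (parent z) := by
  by_cases hz : parent z = z
  · rw [hz]
  · exact (hh z hz).le

theorem HeightIncreasing.le_of_reaches (hh : HeightIncreasing parent h)
    (hab : Reaches parent a b) : h a ≤ h b := by
  obtain ⟨k, rfl⟩ := hab
  induction k generalizing a with
  | zero => exact le_rfl
  | succ k ih => exact (hh.le_apply a).trans (ih (a := parent a))

theorem HeightIncreasing.eq_of_reaches_of_le (hh : HeightIncreasing parent h)
    (hab : Reaches parent a b) (hba : h b ≤ h a) : b = a := by
  obtain ⟨k, rfl⟩ := hab
  induction k generalizing a with
  | zero => rfl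
  | succ k ih =>
    rw [Function.iterate_succ_apply] at hba ⊢
    by_cases ha : parent a = a
    · rw [ha] at hba ⊢
      exact ih hba
    · exact absurd ((hh a ha).trans_le ((hh.le_of_reaches ⟨k, rfl⟩).trans hba)) (lt_irrefl _)

theorem HeightIncreasing.eq_of_reaches_of_eq (hh : HeightIncreasing parent h)
    (hab : Reaches parent a b) (hac : Reaches parent a c) (hbc : h b = h c) : b = c := by
  rcases hab.total hac with hbc' | hcb
  · exact (hh.eq_of_reaches_of_le hbc' hbc.ge).symm
  · exact hh.eq_of_reaches_of_le hcb hbc.le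

end Preorder

theorem HeightIncreasing.exists_minimal_reaches [Finite Z] [LinearOrder α] {h : Z → α}
    (hh : HeightIncreasing parent h) (x : Z) :
    ∃ w, Reaches parent w x ∧ ∀ w', Reaches parent w' w → w' = w := by
  obtain ⟨w, hwx, hmin⟩ :=
    Set.exists_min_image {w | Reaches parent w x} h (Set.toFinite _) ⟨x, Reaches.refl x⟩
  refine ⟨w, hwx, fun w' hw'w => ?_⟩
  exact (hh.eq_of_reaches_of_le hw'w (hmin w' (hw'w.trans hwx))).symm

end ParentMap

theorem stmt7_general {X Y : Type*} [Fintype X]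
    (rootX : X) (parentX : X → X) (f : X → ℝ)
    (hrootX : parentX rootX = rootX)
    (hltX : ∀ x, x ≠ rootX → f x < f (parentX x))
    (rootY : Y) (parentY : Y → Y) (g : Y → ℝ)
    (hrootY : parentY rootY = rootY)
    (hltY : ∀ y, y ≠ rootY → g y < g (parentY y))
    (n : ℕ) (ℓ : Fin n → X) (μ : Fin n → Y)
    (hleaf : ∀ x : X, (∀ w, (∃ k, parentX^[k] w = x) → w = x) → ∃ i, ℓ i = x)
    (φ ψ : X → Y)
    (hφf : ∀ x, g (φ x) = f x) (hψf : ∀ x, g (ψ x) = f x)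
    (hφm : ∀ x₁ x₂, (∃ k, parentX^[k] x₁ = x₂) → ∃ k, parentY^[k] (φ x₁) = φ x₂)
    (hψm : ∀ x₁ x₂, (∃ k, parentX^[k] x₁ = x₂) → ∃ k, parentY^[k] (ψ x₁) = ψ x₂)
    (hφl : ∀ i, ∃ k, parentY^[k] (μ i) = φ (ℓ i))
    (hψl : ∀ i, ∃ k, parentY^[k] (μ i) = ψ (ℓ i)) :
    φ = ψ := by
  have hX : ParentMap.HeightIncreasing parentX f := .of_root hrootX hltX
  have hY : ParentMap.HeightIncreasing parentY g := .of_root hrootY hltY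
  funext x
  obtain ⟨w, hwx, hw⟩ := hX.exists_minimal_reaches x
  obtain ⟨i, rfl⟩ := hleaf w hw
  have hφx : ParentMap.Reaches parentY (μ i) (φ x) := .trans (hφl i) (hφm _ _ hwx)
  have hψx : ParentMap.Reaches parentY (μ i) (ψ x) := .trans (hψl i) (hψm _ _ hwx)
  exact hY.eq_of_reaches_of_eq hφx hψx (by rw [hφf, hψf])

/-- The category of phylogenetic trees with n leaves is a poset: any two parallel
morphisms (function-, order-, and label-preserving maps) coincide. Here merge trees are
modeled as finite rooted trees with height functions, ancestor order
`x ≤ y ↔ ∃ k, parent^[k] x = y`, and every leaf of X is labeled. -/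
theorem stmt7 {X Y : Type*} [Fintype X]
    (rootX : X) (parentX : X → X) (f : X → ℝ)
    (hrootX : parentX rootX = rootX)
    (hltX : ∀ x, x ≠ rootX → f x < f (parentX x))
    (hreachX : ∀ x, ∃ k, parentX^[k] x = rootX)
    (rootY : Y) (parentY : Y → Y) (g : Y → ℝ)
    (hrootY : parentY rootY = rootY)
    (hltY : ∀ y, y ≠ rootY → g y < g (parentY y))
    (hreachY : ∀ y, ∃ k, parentY^[k] y = rootY)
    (n : ℕ) (ℓ : Fin n → X) (μ : Fin n → Y)
    (hleaf : ∀ x : X, (∀ w, (∃ k, parentX^[k] w = x) → w = x) → ∃ i, ℓ i = x)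
    (φ ψ : X → Y)
    (hφf : ∀ x, g (φ x) = f x) (hψf : ∀ x, g (ψ x) = f x)
    (hφm : ∀ x₁ x₂, (∃ k, parentX^[k] x₁ = x₂) → ∃ k, parentY^[k] (φ x₁) = φ x₂)
    (hψm : ∀ x₁ x₂, (∃ k, parentX^[k] x₁ = x₂) → ∃ k, parentY^[k] (ψ x₁) = ψ x₂)
    (hφl : ∀ i, ∃ k, parentY^[k] (μ i) = φ (ℓ i))
    (hψl : ∀ i, ∃ k, parentY^[k] (μ i) = ψ (ℓ i)) :
    φ = ψ :=
  stmt7_general rootX parentX f hrootX hltX rootY parentY g hrootY hltY n ℓ μ hleaf φ ψ hφf hψf hφm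
    hψm hφl hψl
end

section
/- If (X,f,ℓ) ⪯ (Y,g,μ) in the poset of phylogenetic trees with n leaves (i.e., there exists a morphism φ from (X,f,ℓ) to (Y,g,μ)), then the cophenetic vectors satisfy C(X,f,ℓ) ≥ C(Y,g,μ) componentwise; that is, f(ℓ(i) ∨ ℓ(j)) ≥ g(μ(i) ∨ μ(j)) for all 1 ≤ i ≤ j ≤ n. -/
/-- If there is a morphism of phylogenetic trees (X,f,ℓ) → (Y,g,μ), then the cophenetic
vectors satisfy C(X,f,ℓ) ≥ C(Y,g,μ) componentwise:
f(ℓ(i) ∨ ℓ(j)) ≥ g(μ(i) ∨ μ(j)) for all i ≤ j. -/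
theorem stmt8 {X Y : Type*} [SemilatticeSup X] [SemilatticeSup Y]
    (n : ℕ) (f : X → ℝ) (g : Y → ℝ) (hg : Monotone g)
    (ℓ : Fin n → X) (μ : Fin n → Y)
    (φ : X → Y) (hmono : Monotone φ)
    (hfun : ∀ x, g (φ x) = f x)
    (hlabel : ∀ i, μ i ≤ φ (ℓ i)) :
    ∀ i j : Fin n, i ≤ j → g (μ i ⊔ μ j) ≤ f (ℓ i ⊔ ℓ j) := by
  intro i j _
  have hsup : μ i ⊔ μ j ≤ φ (ℓ i ⊔ ℓ j) :=
    (sup_le_sup (hlabel i) (hlabel j)).trans (hmono.le_map_sup _ _)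
  calc g (μ i ⊔ μ j) ≤ g (φ (ℓ i ⊔ ℓ j)) := hg hsup
    _ = f (ℓ i ⊔ ℓ j) := hfun _
end

section
/- The interleaving distance on phylogenetic trees with n leaves induced by the ε-smoothing flow equals the ℓ∞-cophenetic metric: d((X,f,ℓ),(Y,g,μ)) = max_{1 ≤ i ≤ j ≤ n} |f(ℓ(i) ∨ ℓ(j)) − g(μ(i) ∨ μ(j))|, provided the cophenetic map is full (a morphism T → U_ε T' exists whenever C(T) ≥ C(T') − ε componentwise). -/
/-!
Both sides are controlled by the same componentwise inequalities: by (1) and (2) a morphism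
`T → U_ε T'` forces `C T' - ε ≤ C T`, and fullness (3) gives the converse. Hence `T` and `T'` are
`ε`-interleaved exactly when `‖C T - C T'‖_∞ ≤ ε`, so the set whose infimum defines the
interleaving distance is the ray `[‖C T - C T'‖_∞, ∞)`.
-/

section Interleaving

variable {A ι : Type*} {r : A → A → Prop} {U : ℝ → A → A} {C : A → ι → ι → ℝ}

theorem rel_smoothing_iff
    (h1 : ∀ T T' : A, r T T' → ∀ i j, C T' i j ≤ C T i j)
    (h2 : ∀ (ε : ℝ) (T : A) (i j : ι), 0 ≤ ε → C (U ε T) i j = C T i j - ε)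
    (h3 : ∀ (ε : ℝ) (T T' : A), 0 ≤ ε → (∀ i j, C T' i j - ε ≤ C T i j) → r T (U ε T'))
    {ε : ℝ} (hε : 0 ≤ ε) (T T' : A) :
    r T (U ε T') ↔ ∀ i j, C T' i j - ε ≤ C T i j := by
  refine ⟨fun h i j => ?_, h3 ε T T' hε⟩
  simpa only [h2 ε T' i j hε] using h1 T (U ε T') h i j

theorem interleaved_iff_abs_sub_le
    (h1 : ∀ T T' : A, r T T' → ∀ i j, C T' i j ≤ C T i j)
    (h2 : ∀ (ε : ℝ) (T : A) (i j : ι), 0 ≤ ε → C (U ε T) i j = C T i j - ε)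
    (h3 : ∀ (ε : ℝ) (T T' : A), 0 ≤ ε → (∀ i j, C T' i j - ε ≤ C T i j) → r T (U ε T'))
    {ε : ℝ} (hε : 0 ≤ ε) (T T' : A) :
    r T (U ε T') ∧ r T' (U ε T) ↔ ∀ i j, |C T i j - C T' i j| ≤ ε := by
  simp only [rel_smoothing_iff h1 h2 h3 hε, sub_le_comm (b := ε), abs_sub_le_iff, forall_and]
  exact and_comm

end Interleaving

/-- Given trees `A` with an ε-smoothing `U`, a morphism relation `r`, and a cophenetic
map `C` satisfying: (1) a morphism `r T T'` forces `C T' ≤ C T` componentwise,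
(2) `C (U ε T) = C T - ε`, and (3) fullness: `C T' - ε ≤ C T` componentwise implies
`r T (U ε T')`, the interleaving distance induced by the smoothing flow equals the
ℓ∞-cophenetic metric. -/
theorem stmt11 {A : Type*} (n : ℕ) (hn : 0 < n)
    (r : A → A → Prop) (U : ℝ → A → A) (C : A → Fin n → Fin n → ℝ)
    (h1 : ∀ T T' : A, r T T' → ∀ i j, C T' i j ≤ C T i j)
    (h2 : ∀ (ε : ℝ) (T : A) (i j : Fin n), 0 ≤ ε → C (U ε T) i j = C T i j - ε)
    (h3 : ∀ (ε : ℝ) (T T' : A), 0 ≤ ε →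
      (∀ i j, C T' i j - ε ≤ C T i j) → r T (U ε T')) :
    ∀ T T' : A,
      sInf {ε : ℝ | 0 ≤ ε ∧ r T (U ε T') ∧ r T' (U ε T)} =
        Finset.univ.sup' (Finset.univ_nonempty_iff.mpr ⟨(⟨0, hn⟩, ⟨0, hn⟩)⟩)
          (fun p : Fin n × Fin n => |C T p.1 p.2 - C T' p.1 p.2|) := by
  intro T T'
  set M := Finset.univ.sup' (Finset.univ_nonempty_iff.mpr ⟨(⟨0, hn⟩, ⟨0, hn⟩)⟩)
    (fun p : Fin n × Fin n => |C T p.1 p.2 - C T' p.1 p.2|)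
  have hM_le_iff (ε : ℝ) : M ≤ ε ↔ ∀ i j, |C T i j - C T' i j| ≤ ε := by
    simp [M, Finset.sup'_le_iff, Prod.forall]
  have hM : 0 ≤ M := ((hM_le_iff M).1 le_rfl ⟨0, hn⟩ ⟨0, hn⟩).trans' (abs_nonneg _)
  suffices {ε : ℝ | 0 ≤ ε ∧ r T (U ε T') ∧ r T' (U ε T)} = Set.Ici M by
    rw [this, csInf_Ici]
  ext ε
  refine ⟨fun ⟨hε, hrel⟩ => ?_, fun hMε => ⟨hM.trans hMε, ?_⟩⟩
  · exact (hM_le_iff ε).2 ((interleaved_iff_abs_sub_le h1 h2 h3 hε T T').1 hrel)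
  · exact (interleaved_iff_abs_sub_le h1 h2 h3 (hM.trans hMε) T T').2 ((hM_le_iff ε).1 hMε)
end
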